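/- For every c > 0, every ε > 0, and every δ ≥ ε, there exist constants c1 > 0, c2 > 0 and a probability p ∈ (0, 1) with δ < c1·c2·(μ2 − μ1)/(c1·μ1 + c2·μ2) and p < p_δ (so the minimizer of E_δ is ω_(δ,2)) such that for every real m ≥ 0 one has E_ε(ω_m) > c·E_ε(ω_(δ,2)); that is, minimizing the solution-error loss can perform arbitrarily worse than minimizing the iteration count at training tolerance δ. -/

import Mathlib

/-- Relaxed iteration count of a single task with constant `c`, eigenvalue `μ`,
contraction factor `lam`, at initial-guess coefficient `ω`. -/
noncomputable def Leps (ε c μ lam ω : ℝ) : ℝ :=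
  if ω * μ = 1 then 0
  else max 0 (Real.log (ε / (c * |ω * μ - 1|)) / Real.log lam)

/-- Expected relaxed iteration count over the two tasks. -/
noncomputable def Eeps (p ε c1 c2 μ1 μ2 l1 l2 ω : ℝ) : ℝ :=
  p * Leps ε c1 μ1 l1 ω + (1 - p) * Leps ε c2 μ2 l2 ω

/-- `ω_(ε,1) = 1/μ1 − ε/(c1·μ1)`. -/
noncomputable def omegaE1 (ε c1 μ1 : ℝ) : ℝ := 1 / μ1 - ε / (c1 * μ1)

/-- `ω_(ε,2) = 1/μ2 + ε/(c2·μ2)`. -/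
noncomputable def omegaE2 (ε c2 μ2 : ℝ) : ℝ := 1 / μ2 + ε / (c2 * μ2)

/-- Threshold probability `p_ε`. -/
noncomputable def pEps (ε c1 c2 μ1 μ2 l1 l2 : ℝ) : ℝ :=
  Leps ε c2 μ2 l2 (omegaE1 ε c1 μ1) /
  (Leps ε c1 μ1 l1 (omegaE2 ε c2 μ2) + Leps ε c2 μ2 l2 (omegaE1 ε c1 μ1))

/-- Limiting threshold probability `p_0`. -/
noncomputable def pZero (l1 l2 : ℝ) : ℝ :=
  Real.log l1 / (Real.log l1 + Real.log l2)

/-- Minimizer of the expected `m`-step solution error in the two-task Jacobi setting. -/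
noncomputable def omegaM (p c1 c2 μ1 μ2 l1 l2 m : ℝ) : ℝ :=
  (p * c1 ^ 2 * μ1 * l1 ^ (2 * m) + (1 - p) * c2 ^ 2 * μ2 * l2 ^ (2 * m)) /
  (p * c1 ^ 2 * μ1 ^ 2 * l1 ^ (2 * m) + (1 - p) * c2 ^ 2 * μ2 ^ 2 * l2 ^ (2 * m))

/-! Take `c1 = c2 = t → ∞` and a small weight `p`. Uniformly in `m`, `ω_m μ2 - 1` stays above a
positive constant, so with `ω_m` task 2 needs about `log t / (-log λ2)` iterations. With `ω_(δ,2)`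
task 2 starts at error exactly `δ`, a cost independent of `t`, and task 1 costs at most
`log t / (-log λ1)`. Once `c p / (-log λ1) < (1 - p) / (-log λ2)`, comparing these growth rates in
`log t` gives the claimed inequality for large `t`; the same comparison at tolerance `δ` (with
`c = 1`) gives `p < p_δ`. -/

open Filter Topology Real

lemma Leps_nonneg (ε c μ lam ω : ℝ) : 0 ≤ Leps ε c μ lam ω := by
  unfold Leps; split <;> simp

section Bounds

variable {ε c μ lam ω K : ℝ}

lemma Leps_eq_max_log_div (hω : ω * μ ≠ 1) :
    Leps ε c μ lam ω = max 0 (log (c * |ω * μ - 1| / ε) / -log lam) := by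
  rw [Leps, if_neg hω, ← inv_div (c * |ω * μ - 1|), Real.log_inv, div_neg, neg_div]

lemma Leps_le_log_div (hε : 0 < ε) (hlam₀ : 0 < lam) (hlam₁ : lam < 1)
    (hpos : 0 < c * |ω * μ - 1|) (hK : c * |ω * μ - 1| ≤ K) (hεK : ε ≤ K) :
    Leps ε c μ lam ω ≤ log (K / ε) / -log lam := by
  have hω : ω * μ ≠ 1 := by rintro h; simp [h] at hpos
  have hL : 0 < -log lam := neg_pos.2 (log_neg hlam₀ hlam₁)
  rw [Leps_eq_max_log_div hω]
  refine max_le (div_nonneg (log_nonneg ((one_le_div hε).2 hεK)) hL.le) ?_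
  gcongr

lemma log_div_le_Leps (hε : 0 < ε) (hlam₀ : 0 < lam) (hlam₁ : lam < 1)
    (hK₀ : 0 < K) (hK : K ≤ c * |ω * μ - 1|) :
    log (K / ε) / -log lam ≤ Leps ε c μ lam ω := by
  have hω : ω * μ ≠ 1 := by rintro h; simp [h] at hK; linarith
  have hL : 0 < -log lam := neg_pos.2 (log_neg hlam₀ hlam₁)
  rw [Leps_eq_max_log_div hω]
  refine le_max_of_le_right ?_
  gcongr

end Bounds

lemma mul_omegaE2_mul_sub_one {δ c μ : ℝ} (hc : c ≠ 0) (hμ : μ ≠ 0) :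
    c * (omegaE2 δ c μ * μ - 1) = δ := by
  unfold omegaE2; field_simp; ring

lemma Leps_omegaE2_self {ε δ c μ lam : ℝ} (hδ : 0 < δ) (hc : 0 < c) (hμ : 0 < μ) :
    Leps ε c μ lam (omegaE2 δ c μ) = max 0 (log (δ / ε) / -log lam) := by
  have h := mul_omegaE2_mul_sub_one (δ := δ) hc.ne' hμ.ne'
  have hpos : 0 < omegaE2 δ c μ * μ - 1 := pos_of_mul_pos_right (by rwa [h]) hc.le
  rw [Leps_eq_max_log_div (by linarith), abs_of_pos hpos, h]

lemma tendsto_omegaE1 (ε : ℝ) {μ : ℝ} (hμ : 0 < μ) :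
    Tendsto (fun c => omegaE1 ε c μ) atTop (𝓝 (1 / μ)) := by
  simpa [omegaE1] using
    tendsto_const_nhds.sub (tendsto_const_nhds.div_atTop (tendsto_id.atTop_mul_const hμ))

lemma tendsto_omegaE2 (ε : ℝ) {μ : ℝ} (hμ : 0 < μ) :
    Tendsto (fun c => omegaE2 ε c μ) atTop (𝓝 (1 / μ)) := by
  simpa [omegaE2] using
    tendsto_const_nhds.add (tendsto_const_nhds.div_atTop (tendsto_id.atTop_mul_const hμ))

lemma le_omegaM_mul_sub_one {p c μ1 μ2 l1 l2 m : ℝ} (hp0 : 0 < p) (hp1 : p ≤ 1) (hc : c ≠ 0)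
    (hμ1 : 0 < μ1) (hμ12 : μ1 < μ2) (hl2 : 0 < l2) (hl21 : l2 ≤ l1) (hm : 0 ≤ m) :
    p * μ1 * (μ2 - μ1) / (p * μ1 ^ 2 + (1 - p) * μ2 ^ 2) ≤ omegaM p c c μ1 μ2 l1 l2 m * μ2 - 1 := by
  have hb : 0 < l2 ^ (2 * m) := rpow_pos_of_pos hl2 _
  have hba : l2 ^ (2 * m) ≤ l1 ^ (2 * m) := rpow_le_rpow hl2.le hl21 (by positivity)
  rw [omegaM]
  generalize l2 ^ (2 * m) = b at hb hba ⊢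
  generalize l1 ^ (2 * m) = a at hba ⊢
  have hq : 0 ≤ 1 - p := sub_nonneg.2 hp1
  have hD : 0 < p * μ1 ^ 2 * a + (1 - p) * μ2 ^ 2 * b := by
    have := hb.trans_le hba; positivity
  have hω : (p * c ^ 2 * μ1 * a + (1 - p) * c ^ 2 * μ2 * b) /
      (p * c ^ 2 * μ1 ^ 2 * a + (1 - p) * c ^ 2 * μ2 ^ 2 * b) * μ2 - 1
      = p * μ1 * (μ2 - μ1) * a / (p * μ1 ^ 2 * a + (1 - p) * μ2 ^ 2 * b) := by
    rw [show p * c ^ 2 * μ1 ^ 2 * a + (1 - p) * c ^ 2 * μ2 ^ 2 * b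
      = c ^ 2 * (p * μ1 ^ 2 * a + (1 - p) * μ2 ^ 2 * b) by ring]
    field_simp [hD.ne']
    ring
  rw [hω, div_le_div_iff₀ (by positivity) hD]
  have := mul_nonneg (mul_nonneg (mul_nonneg hp0.le hq)
    (by positivity : 0 ≤ μ1 * (μ2 - μ1) * μ2 ^ 2)) (sub_nonneg.2 hba)
  nlinarith

lemma eventually_mul_log_add_lt {a b : ℝ} (hab : a < b) (c d : ℝ) :
    ∀ᶠ t in atTop, a * log t + c < b * log t + d := by
  filter_upwards [tendsto_log_atTop.eventually_gt_atTop ((c - d) / (b - a))] with t ht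
  rw [div_lt_iff₀ (sub_pos.2 hab)] at ht
  linarith

lemma eventually_mul_div_lt_one_sub_div (c L₁ : ℝ) {L₂ : ℝ} (hL₂ : 0 < L₂) :
    ∀ᶠ p in 𝓝 0, c * (p / L₁) < (1 - p) / L₂ :=
  ContinuousAt.eventually_lt (by fun_prop) (by fun_prop) (by simpa using hL₂)

lemma tendsto_mul_mul_div_add_atTop {μ1 μ2 : ℝ} (hμ1 : 0 < μ1) (hμ12 : μ1 < μ2) :
    Tendsto (fun t => t * t * (μ2 - μ1) / (t * μ1 + t * μ2)) atTop atTop := by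
  have hr : 0 < (μ2 - μ1) / (μ1 + μ2) := div_pos (sub_pos.2 hμ12) (by linarith)
  refine (tendsto_id.atTop_mul_const hr).congr' ?_
  filter_upwards [eventually_gt_atTop 0] with t ht
  rw [id, ← mul_add, mul_assoc, mul_div_mul_left _ _ ht.ne', mul_div_assoc]

section Eventually

variable {ε δ μ1 μ2 l1 l2 p : ℝ}

lemma eventually_Leps_omegaE2_le (hε : 0 < ε) (hμ1 : 0 < μ1) (hμ12 : μ1 < μ2)
    (hl1₀ : 0 < l1) (hl1₁ : l1 < 1) :
    ∀ᶠ t in atTop, Leps ε t μ1 l1 (omegaE2 δ t μ2) ≤ log (t / ε) / -log l1 := by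
  have h := (tendsto_omegaE2 δ (hμ1.trans hμ12)).mul_const μ1
  rw [one_div_mul_eq_div] at h
  filter_upwards [h.eventually_const_lt (div_pos hμ1 (hμ1.trans hμ12)),
    h.eventually_lt_const ((div_lt_one (hμ1.trans hμ12)).2 hμ12),
    eventually_gt_atTop 0, eventually_ge_atTop ε] with t h0 h1 ht hεt
  have habs : |omegaE2 δ t μ2 * μ1 - 1| = 1 - omegaE2 δ t μ2 * μ1 := by
    rw [abs_of_neg (by linarith), neg_sub]
  refine Leps_le_log_div hε hl1₀ hl1₁ ?_ ?_ hεt <;> rw [habs]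
  · exact mul_pos ht (by linarith)
  · exact mul_le_of_le_one_right ht.le (by linarith)

lemma eventually_log_mul_div_le_Leps_omegaE1 (hε : 0 < ε) (hμ1 : 0 < μ1)
    (hl2₀ : 0 < l2) (hl2₁ : l2 < 1) {Z : ℝ} (hZ₀ : 0 < Z) (hZ : Z < μ2 / μ1 - 1) :
    ∀ᶠ t in atTop, log (t * Z / ε) / -log l2 ≤ Leps ε t μ2 l2 (omegaE1 δ t μ1) := by
  have h := ((tendsto_omegaE1 δ hμ1).mul_const μ2).sub_const 1
  rw [one_div_mul_eq_div] at h
  filter_upwards [h.eventually_const_lt hZ, eventually_gt_atTop 0] with t hZt ht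
  refine log_div_le_Leps hε hl2₀ hl2₁ (by positivity) ?_
  rw [abs_of_pos (hZ₀.trans hZt)]
  exact mul_le_mul_of_nonneg_left hZt.le ht.le

lemma eventually_lt_pEps (hδ : 0 < δ) (hμ1 : 0 < μ1) (hμ12 : μ1 < μ2)
    (hl1₀ : 0 < l1) (hl1₁ : l1 < 1) (hl2₀ : 0 < l2) (hl2₁ : l2 < 1) (hp0 : 0 ≤ p) (hp1 : p < 1)
    (hp : p / -log l1 < (1 - p) / -log l2) :
    ∀ᶠ t in atTop, p < pEps δ t t μ1 μ2 l1 l2 := by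
  have hμ : 1 < μ2 / μ1 := (one_lt_div hμ1).2 hμ12
  set L1 := -log l1
  set L2 := -log l2
  set Z := (μ2 / μ1 - 1) / 2
  filter_upwards [eventually_gt_atTop 0,
    eventually_Leps_omegaE2_le (δ := δ) hδ hμ1 hμ12 hl1₀ hl1₁,
    eventually_log_mul_div_le_Leps_omegaE1 (δ := δ) hδ hμ1 hl2₀ hl2₁
      (half_pos (sub_pos.2 hμ)) (half_lt_self (sub_pos.2 hμ)),
    eventually_mul_log_add_lt hp (-(p / L1) * log δ) ((1 - p) / L2 * log (Z / δ))]
    with t ht hA hB hlin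
  rw [log_div ht.ne' hδ.ne'] at hA
  rw [mul_div_assoc, log_mul ht.ne' (by positivity)] at hB
  set A := Leps δ t μ1 l1 (omegaE2 δ t μ2)
  set B := Leps δ t μ2 l2 (omegaE1 δ t μ1)
  have hAB : p * A < (1 - p) * B := calc
    p * A ≤ p * ((log t - log δ) / L1) := mul_le_mul_of_nonneg_left hA hp0
    _ = p / L1 * log t + -(p / L1) * log δ := by ring
    _ < (1 - p) / L2 * log t + (1 - p) / L2 * log (Z / δ) := hlin
    _ = (1 - p) * ((log t + log (Z / δ)) / L2) := by ring
    _ ≤ (1 - p) * B := mul_le_mul_of_nonneg_left hB (by linarith)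
  have hA0 : 0 ≤ A := Leps_nonneg _ _ _ _ _
  have hB0 : 0 < B := pos_of_mul_pos_right ((mul_nonneg hp0 hA0).trans_lt hAB) (by linarith)
  rw [pEps, lt_div_iff₀ (by linarith)]
  linarith

lemma eventually_Eeps_omegaM_gt {c : ℝ} (hc : 0 ≤ c) (hε : 0 < ε) (hδ : 0 < δ)
    (hμ1 : 0 < μ1) (hμ12 : μ1 < μ2) (hl1₁ : l1 < 1) (hl2₀ : 0 < l2) (hl21 : l2 ≤ l1)
    (hp0 : 0 < p) (hp1 : p < 1) (hpc : c * (p / -log l1) < (1 - p) / -log l2) :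
    ∀ᶠ t in atTop, ∀ m, 0 ≤ m →
      Eeps p ε t t μ1 μ2 l1 l2 (omegaM p t t μ1 μ2 l1 l2 m) >
        c * Eeps p ε t t μ1 μ2 l1 l2 (omegaE2 δ t μ2) := by
  have hq : 0 < 1 - p := by linarith
  have hC (t : ℝ) (ht : 0 < t) :
      Leps ε t μ2 l2 (omegaE2 δ t μ2) = max 0 (log (δ / ε) / -log l2) :=
    Leps_omegaE2_self hδ ht (hμ1.trans hμ12)
  set L1 := -log l1
  set L2 := -log l2
  set G := p * μ1 * (μ2 - μ1) / (p * μ1 ^ 2 + (1 - p) * μ2 ^ 2)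
  have hG : 0 < G := by have := sub_pos.2 hμ12; positivity
  set C := max 0 (log (δ / ε) / L2)
  filter_upwards [eventually_gt_atTop 0,
    eventually_Leps_omegaE2_le (δ := δ) hε hμ1 hμ12 (hl2₀.trans_le hl21) hl1₁,
    eventually_mul_log_add_lt hpc (c * (-(p / L1) * log ε + (1 - p) * C))
      ((1 - p) / L2 * log (G / ε))] with t ht hA hlin m hm
  rw [log_div ht.ne' hε.ne'] at hA
  have hB : (log t + log (G / ε)) / L2 ≤ Leps ε t μ2 l2 (omegaM p t t μ1 μ2 l1 l2 m) := by
    rw [← log_mul ht.ne' (by positivity), ← mul_div_assoc]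
    refine log_div_le_Leps hε hl2₀ (hl21.trans_lt hl1₁) (by positivity) ?_
    exact mul_le_mul_of_nonneg_left
      ((le_omegaM_mul_sub_one hp0 hp1.le ht.ne' hμ1 hμ12 hl2₀ hl21 hm).trans (le_abs_self _))
      ht.le
  have hE2 : Eeps p ε t t μ1 μ2 l1 l2 (omegaE2 δ t μ2) ≤
      p * ((log t - log ε) / L1) + (1 - p) * C := by
    rw [Eeps, hC t ht]
    exact add_le_add_left (mul_le_mul_of_nonneg_left hA hp0.le) _
  have hEm : (1 - p) * ((log t + log (G / ε)) / L2) ≤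
      Eeps p ε t t μ1 μ2 l1 l2 (omegaM p t t μ1 μ2 l1 l2 m) := by
    rw [Eeps]
    linarith [mul_le_mul_of_nonneg_left hB hq.le, mul_nonneg hp0.le (Leps_nonneg ε t μ1 l1
      (omegaM p t t μ1 μ2 l1 l2 m))]
  calc c * Eeps p ε t t μ1 μ2 l1 l2 (omegaE2 δ t μ2)
      ≤ c * (p * ((log t - log ε) / L1) + (1 - p) * C) := mul_le_mul_of_nonneg_left hE2 hc
    _ = c * (p / L1) * log t + c * (-(p / L1) * log ε + (1 - p) * C) := by ring
    _ < (1 - p) / L2 * log t + (1 - p) / L2 * log (G / ε) := hlin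
    _ = (1 - p) * ((log t + log (G / ε)) / L2) := by ring
    _ ≤ _ := hEm

end Eventually

/-- Minimizing the solution-error loss can perform arbitrarily worse than
minimizing the iteration count at training tolerance `δ`. -/
theorem Eeps_omegaM_arbitrarily_worse (μ1 μ2 l1 l2 : ℝ)
    (hμ1 : 0 < μ1) (hμ12 : μ1 < μ2) (hμ2 : μ2 < 2)
    (hl1 : l1 = 1 - μ1 / 2) (hl2 : l2 = 1 - μ2 / 2)
    (c ε δ : ℝ) (hc : 0 < c) (hε : 0 < ε) (hδ : ε ≤ δ) :
    ∃ c1 c2 p : ℝ, 0 < c1 ∧ 0 < c2 ∧ 0 < p ∧ p < 1 ∧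
      δ < c1 * c2 * (μ2 - μ1) / (c1 * μ1 + c2 * μ2) ∧
      p < pEps δ c1 c2 μ1 μ2 l1 l2 ∧
      ∀ m : ℝ, 0 ≤ m →
        Eeps p ε c1 c2 μ1 μ2 l1 l2 (omegaM p c1 c2 μ1 μ2 l1 l2 m) >
          c * Eeps p ε c1 c2 μ1 μ2 l1 l2 (omegaE2 δ c2 μ2) := by
  have hδ0 : 0 < δ := hε.trans_le hδ
  have hl1₀ : 0 < l1 := by linarith
  have hl1₁ : l1 < 1 := by linarith
  have hl2₀ : 0 < l2 := by linarith
  have hl21 : l2 ≤ l1 := by linarith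
  have hL2 : 0 < -log l2 := neg_pos.2 (log_neg hl2₀ (by linarith))
  obtain ⟨p, ⟨hpc, hp⟩, hp0, hp1⟩ :=
    (((eventually_mul_div_lt_one_sub_div c (-log l1) hL2).and
      (eventually_mul_div_lt_one_sub_div 1 (-log l1) hL2)).filter_mono nhdsWithin_le_nhds
      |>.and (Ioo_mem_nhdsGT one_pos)).exists
  rw [one_mul] at hp
  obtain ⟨t, ht, htδ, htp, htE⟩ := ((eventually_gt_atTop 0).and <|
    ((tendsto_mul_mul_div_add_atTop hμ1 hμ12).eventually_gt_atTop δ).and <|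
    (eventually_lt_pEps hδ0 hμ1 hμ12 hl1₀ hl1₁ hl2₀ (by linarith) hp0.le hp1 hp).and
    (eventually_Eeps_omegaM_gt hc.le hε hδ0 hμ1 hμ12 hl1₁ hl2₀ hl21 hp0 hp1 hpc)).exists
  exact ⟨t, t, p, ht, ht, hp0, hp1, htδ, htp, htE⟩
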